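/- arXiv:1909.07944 — 8 statements merged into one kernel-verified Lean document; each statement's English description precedes it below -/
import Mathlib

section
/- For a fixed vector a ∈ ℝ^p and γ ≥ 0, the maximum of z ↦ aᵀz − γ‖z‖₁ over the unit sphere {z : ‖z‖₂ = 1} equals sqrt(∑_{i=1}^p max(|a_i| − γ, 0)²), provided some |a_i| > γ. -/
lemma sign_mul_self_eq_abs (x : ℝ) : Real.sign x * x = |x| := by
  rcases lt_trichotomy x 0 with h | h | h
  · rw [Real.sign_of_neg h, abs_of_neg h]; ring
  · simp [h]
  · rw [Real.sign_of_pos h, abs_of_pos h]; ring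

lemma abs_sign_of_ne_zero {x : ℝ} (hx : x ≠ 0) : |Real.sign x| = 1 := by
  rcases Real.sign_apply_eq_of_ne_zero x hx with h | h <;> rw [h] <;> norm_num

lemma sq_sign_of_ne_zero {x : ℝ} (hx : x ≠ 0) : Real.sign x ^ 2 = 1 := by
  rcases Real.sign_apply_eq_of_ne_zero x hx with h | h <;> rw [h] <;> norm_num

/-- For fixed `a ∈ ℝ^p` and `γ ≥ 0` with some `|a i| > γ`, the maximum of
`z ↦ aᵀz − γ‖z‖₁` over the unit sphere equals `sqrt (∑ i, max (|a i| − γ) 0 ^ 2)`. -/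
theorem stmt0 (p : ℕ) (a : Fin p → ℝ) (γ : ℝ) (hγ : 0 ≤ γ)
    (hex : ∃ i, γ < |a i|) :
    IsGreatest
      {v : ℝ | ∃ z : Fin p → ℝ, (∑ i, z i ^ 2) = 1 ∧
        v = (∑ i, a i * z i) - γ * ∑ i, |z i|}
      (Real.sqrt (∑ i, max (|a i| - γ) 0 ^ 2)) := by
  set s : Fin p → ℝ := fun i => max (|a i| - γ) 0 with hs
  set S : ℝ := ∑ i, s i ^ 2 with hSdef
  have hS : 0 < S := by
    obtain ⟨i, hi⟩ := hex
    refine Finset.sum_pos' (fun j _ => sq_nonneg _) ⟨i, Finset.mem_univ i, ?_⟩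
    have : 0 < s i := lt_max_of_lt_left (by linarith)
    positivity
  have hsqrt : 0 < Real.sqrt S := Real.sqrt_pos.mpr hS
  have hsnn : ∀ i, 0 ≤ s i := fun i => le_max_right _ _
  have hane : ∀ i, 0 < s i → a i ≠ 0 := by
    intro i h h0
    have : s i = 0 := by
      rw [hs]; simp only [h0, abs_zero, zero_sub]
      exact max_eq_right (by linarith)
    linarith
  have hseq : ∀ i, 0 < s i → s i = |a i| - γ := by
    intro i h
    rcases lt_max_iff.mp h with h' | h'
    · exact max_eq_left h'.le
    · exact absurd h' (lt_irrefl 0)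
  constructor
  · refine ⟨fun i => Real.sign (a i) * s i / Real.sqrt S, ?_, ?_⟩
    · have h1 : ∀ i, (Real.sign (a i) * s i / Real.sqrt S) ^ 2 = s i ^ 2 / S := by
        intro i
        rcases eq_or_lt_of_le (hsnn i) with h | h
        · rw [← h]; simp
        · rw [div_pow, Real.sq_sqrt hS.le, mul_pow, sq_sign_of_ne_zero (hane i h), one_mul]
      simp_rw [h1, ← Finset.sum_div, ← hSdef]
      field_simp
    · have h2 : ∀ i, a i * (Real.sign (a i) * s i / Real.sqrt S) = |a i| * s i / Real.sqrt S := by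
        intro i
        rw [← sign_mul_self_eq_abs]; ring
      have h3 : ∀ i, |Real.sign (a i) * s i / Real.sqrt S| = s i / Real.sqrt S := by
        intro i
        rcases eq_or_lt_of_le (hsnn i) with h | h
        · rw [← h]; simp
        · rw [abs_div, abs_mul, abs_of_nonneg (hsnn i), abs_of_nonneg hsqrt.le,
            abs_sign_of_ne_zero (hane i h), one_mul]
      simp_rw [h2, h3]
      rw [Finset.mul_sum, ← Finset.sum_sub_distrib]
      have h4 : ∀ i, |a i| * s i / Real.sqrt S - γ * (s i / Real.sqrt S)
          = s i ^ 2 / Real.sqrt S := by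
        intro i
        have key : (|a i| - γ) * s i = s i ^ 2 := by
          rcases eq_or_lt_of_le (hsnn i) with h | h
          · rw [← h]; ring
          · rw [hseq i h]; ring
        calc |a i| * s i / Real.sqrt S - γ * (s i / Real.sqrt S)
            = ((|a i| - γ) * s i) / Real.sqrt S := by ring
          _ = s i ^ 2 / Real.sqrt S := by rw [key]
      simp_rw [h4]
      rw [← Finset.sum_div, ← hSdef, eq_div_iff hsqrt.ne', Real.mul_self_sqrt hS.le]
  · rintro v ⟨z, hz, rfl⟩
    have step1 : (∑ i, a i * z i) - γ * ∑ i, |z i| ≤ ∑ i, s i * |z i| := by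
      rw [Finset.mul_sum, ← Finset.sum_sub_distrib]
      refine Finset.sum_le_sum fun i _ => ?_
      have h1 : a i * z i ≤ |a i| * |z i| := by
        calc a i * z i ≤ |a i * z i| := le_abs_self _
        _ = |a i| * |z i| := abs_mul _ _
      have h2 : |a i| - γ ≤ s i := le_max_left _ _
      nlinarith [abs_nonneg (z i)]
    have step2 : ∑ i, s i * |z i| ≤ Real.sqrt S * Real.sqrt (∑ i, |z i| ^ 2) := by
      simpa using Real.sum_mul_le_sqrt_mul_sqrt Finset.univ s (fun i => |z i|)
    have hz' : (∑ i, |z i| ^ 2) = 1 := by simp_rw [sq_abs]; exact hz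
    rw [hz', Real.sqrt_one, mul_one] at step2
    exact step1.trans step2
end

section
/- For a fixed vector a ∈ ℝ^p and γ ≥ 0 with max_i |a_i| > γ, the maximizer z* of z ↦ aᵀz − γ‖z‖₁ over the unit sphere has coordinates z*_i = sgn(a_i)·[|a_i| − γ]₊ / sqrt(∑_k [|a_k| − γ]₊²). -/
/-- The maximizer of `z ↦ aᵀz − γ‖z‖₁` over the unit sphere is the normalized
soft-thresholding `z*_i = sgn(a_i)[|a_i| − γ]₊ / sqrt(∑ₖ [|a_k| − γ]₊²)`. -/
theorem stmt1 (p : ℕ) (a : Fin p → ℝ) (γ : ℝ) (hγ : 0 ≤ γ)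
    (hex : ∃ i, γ < |a i|)
    (zstar : Fin p → ℝ)
    (hzstar : ∀ i, zstar i =
      Real.sign (a i) * max (|a i| - γ) 0 /
        Real.sqrt (∑ k, max (|a k| - γ) 0 ^ 2)) :
    (∑ i, zstar i ^ 2) = 1 ∧
    ∀ z : Fin p → ℝ, (∑ i, z i ^ 2) = 1 →
      (∑ i, a i * z i) - γ * ∑ i, |z i| ≤
      (∑ i, a i * zstar i) - γ * ∑ i, |zstar i| := by
  set m : Fin p → ℝ := fun i => max (|a i| - γ) 0 with hm
  have hmnn : ∀ i, 0 ≤ m i := fun i => le_max_right _ _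
  have hS2pos : 0 < ∑ k, m k ^ 2 := by
    obtain ⟨i, hi⟩ := hex
    refine Finset.sum_pos' (fun k _ => sq_nonneg _) ⟨i, Finset.mem_univ i, ?_⟩
    exact pow_pos (lt_of_lt_of_le (sub_pos.mpr hi) (le_max_left _ _)) 2
  set S : ℝ := Real.sqrt (∑ k, m k ^ 2) with hSdef
  have hSpos : 0 < S := Real.sqrt_pos.mpr hS2pos
  have hSsq : S ^ 2 = ∑ k, m k ^ 2 := Real.sq_sqrt hS2pos.le
  -- pointwise facts
  have hsq : ∀ i, (Real.sign (a i) * m i) ^ 2 = m i ^ 2 := by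
    intro i
    rcases lt_trichotomy (a i) 0 with h | h | h
    · rw [Real.sign_of_neg h]; ring
    · have : m i = 0 := by
        simp only [hm, h, abs_zero, zero_sub]
        exact max_eq_right (by linarith)
      simp [this]
    · rw [Real.sign_of_pos h]; ring
  have habsm : ∀ i, |Real.sign (a i) * m i| = m i := by
    intro i
    rw [← Real.sqrt_sq_eq_abs, hsq i, Real.sqrt_sq (hmnn i)]
  have hsgn : ∀ i, a i * Real.sign (a i) * m i = |a i| * m i := by
    intro i
    rcases lt_trichotomy (a i) 0 with h | h | h
    · rw [Real.sign_of_neg h, abs_of_neg h]; ring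
    · simp [h]
    · rw [Real.sign_of_pos h, abs_of_pos h]; ring
  have hmm : ∀ i, (|a i| - γ) * m i = m i ^ 2 := by
    intro i
    rcases le_or_gt (|a i|) γ with h | h
    · have : m i = 0 := max_eq_right (sub_nonpos.mpr h)
      simp [this]
    · have : m i = |a i| - γ := max_eq_left (sub_nonneg.mpr h.le)
      rw [this]; ring
  -- value at zstar equals S
  have hval : (∑ i, a i * zstar i) - γ * ∑ i, |zstar i| = S := by
    have hrfl : ∀ i, (max (|a i| - γ) 0 : ℝ) = m i := fun _ => rfl
    have h1 : ∀ i, a i * zstar i = |a i| * m i / S := by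
      intro i
      rw [hzstar i, hrfl i, mul_div_assoc', ← mul_assoc, hsgn i]
    have h2 : ∀ i, |zstar i| = m i / S := by
      intro i
      rw [hzstar i, hrfl i, abs_div, habsm i, abs_of_pos hSpos]
    rw [Finset.sum_congr rfl (fun i _ => h1 i),
        Finset.sum_congr rfl (fun i _ => h2 i)]
    have key : (∑ i, |a i| * m i) - γ * ∑ i, m i = S ^ 2 := by
      rw [hSsq, Finset.mul_sum, ← Finset.sum_sub_distrib]
      refine Finset.sum_congr rfl fun i _ => ?_
      rw [← hmm i]; ring
    rw [← Finset.sum_div, ← Finset.sum_div, ← mul_div_assoc, div_sub_div_same, key,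
        sq, mul_div_assoc, div_self hSpos.ne', mul_one]
  constructor
  · have h1 : ∀ i, zstar i ^ 2 = m i ^ 2 / (∑ k, m k ^ 2) := by
      intro i
      rw [hzstar i, show (max (|a i| - γ) 0 : ℝ) = m i from rfl, div_pow, hsq i, hSsq]
    rw [Finset.sum_congr rfl (fun i _ => h1 i), ← Finset.sum_div]
    exact div_self hS2pos.ne'
  · intro z hz
    rw [hval]
    have step1 : (∑ i, a i * z i) - γ * ∑ i, |z i| ≤ ∑ i, m i * |z i| := by
      have h1 : (∑ i, a i * z i) ≤ ∑ i, |a i| * |z i| := by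
        refine Finset.sum_le_sum fun i _ => ?_
        rw [← abs_mul]; exact le_abs_self _
      have h2 : (∑ i, |a i| * |z i|) - γ * ∑ i, |z i| ≤ ∑ i, m i * |z i| := by
        rw [Finset.mul_sum, ← Finset.sum_sub_distrib]
        refine Finset.sum_le_sum fun i _ => ?_
        have : |a i| * |z i| - γ * |z i| = (|a i| - γ) * |z i| := by ring
        rw [this]
        exact mul_le_mul_of_nonneg_right (le_max_left _ _) (abs_nonneg _)
      linarith
    refine step1.trans ?_
    have hcs2 : (∑ i, m i * |z i|) ^ 2 ≤ (∑ i, m i ^ 2) * (∑ i, |z i| ^ 2) :=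
      Finset.sum_mul_sq_le_sq_mul_sq Finset.univ m (fun i => |z i|)
    have hznorm : (∑ i, |z i| ^ 2) = 1 := by
      rw [← hz]; exact Finset.sum_congr rfl fun i _ => sq_abs _
    rw [hznorm, mul_one] at hcs2
    have hnn : 0 ≤ ∑ i, m i * |z i| :=
      Finset.sum_nonneg fun i _ => mul_nonneg (hmnn i) (abs_nonneg _)
    calc ∑ i, m i * |z i| = Real.sqrt ((∑ i, m i * |z i|) ^ 2) :=
            (Real.sqrt_sq hnn).symm
      _ ≤ S := Real.sqrt_le_sqrt hcs2
end

section
/- With a ∈ ℝ^p, γ ≥ 0, max_i|a_i| > γ, and z* the maximizer of aᵀz − γ‖z‖₁ over the unit sphere, the i-th coordinate of z* is zero if and only if |a_i| ≤ γ. -/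
/-- Sparsity pattern of the soft-thresholded maximizer: `z*_i = 0 ↔ |a_i| ≤ γ`. -/
theorem stmt2 (p : ℕ) (a : Fin p → ℝ) (γ : ℝ) (hγ : 0 ≤ γ)
    (hex : ∃ i, γ < |a i|)
    (zstar : Fin p → ℝ)
    (hzstar : ∀ i, zstar i =
      Real.sign (a i) * max (|a i| - γ) 0 /
        Real.sqrt (∑ k, max (|a k| - γ) 0 ^ 2)) :
    ∀ i, zstar i = 0 ↔ |a i| ≤ γ := by
  obtain ⟨j, hj⟩ := hex
  have hSpos : 0 < ∑ k, max (|a k| - γ) 0 ^ 2 := by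
    apply Finset.sum_pos' (fun k _ => sq_nonneg _)
    refine ⟨j, Finset.mem_univ j, ?_⟩
    have : 0 < max (|a j| - γ) 0 := lt_max_of_lt_left (by linarith)
    positivity
  have hsq : 0 < Real.sqrt (∑ k, max (|a k| - γ) 0 ^ 2) := Real.sqrt_pos.mpr hSpos
  intro i
  rw [hzstar i, div_eq_zero_iff]
  constructor
  · rintro (h | h)
    · rcases mul_eq_zero.mp h with h | h
      · by_contra hcon
        push_neg at hcon
        have ha : a i ≠ 0 := by
          intro h0; rw [h0, abs_zero] at hcon; linarith
        exact ha (Real.sign_eq_zero_iff.mp h)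
      · by_contra hcon
        push_neg at hcon
        have : 0 < max (|a i| - γ) 0 := lt_max_of_lt_left (by linarith)
        linarith
    · exact absurd h (ne_of_gt hsq)
  · intro h
    left
    have : max (|a i| - γ) 0 = 0 := max_eq_right (by linarith)
    rw [this, mul_zero]
end

section
/- For a fixed a ∈ ℝ^p and γ ≥ 0, the maximum of z ↦ (aᵀz)² − γ‖z‖₀ over the unit sphere equals ∑_{i=1}^p [a_i² − γ]₊, provided max_i a_i² > γ. -/
/-- For fixed `a ∈ ℝ^p` and `γ ≥ 0` with some `a_i² > γ`, the maximum of
`z ↦ (aᵀz)² − γ‖z‖₀` over the unit sphere equals `∑ i, [a_i² − γ]₊`. -/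
theorem stmt4 (p : ℕ) (a : Fin p → ℝ) (γ : ℝ) (hγ : 0 ≤ γ)
    (hex : ∃ i, γ < a i ^ 2) :
    IsGreatest
      {v : ℝ | ∃ z : Fin p → ℝ, (∑ i, z i ^ 2) = 1 ∧
        v = (∑ i, a i * z i) ^ 2 -
          γ * ((Finset.univ.filter fun i => z i ≠ 0).card : ℝ)}
      (∑ i, max (a i ^ 2 - γ) 0) := by
  obtain ⟨i₀, hi₀⟩ := hex
  set S : Finset (Fin p) := Finset.univ.filter (fun i => γ < a i ^ 2) with hS
  have hi₀S : i₀ ∈ S := by simp [hS, hi₀]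
  set N : ℝ := ∑ i ∈ S, a i ^ 2 with hN
  have hNpos : 0 < N :=
    Finset.sum_pos' (fun i _ => sq_nonneg _) ⟨i₀, hi₀S, lt_of_le_of_lt hγ hi₀⟩
  have hsqrt : 0 < Real.sqrt N := Real.sqrt_pos.mpr hNpos
  have hmaxsum : (∑ i, max (a i ^ 2 - γ) 0) = ∑ i ∈ S, (a i ^ 2 - γ) := by
    rw [hS, Finset.sum_filter]
    refine Finset.sum_congr rfl fun i _ => ?_
    by_cases h : γ < a i ^ 2
    · simp [h, le_of_lt (sub_pos.mpr h)]
    · simp [h, max_eq_right (sub_nonpos.mpr (not_lt.mp h))]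
  constructor
  · refine ⟨fun i => if i ∈ S then a i / Real.sqrt N else 0, ?_, ?_⟩
    · have : ∀ i : Fin p, (if i ∈ S then a i / Real.sqrt N else 0) ^ 2
          = if i ∈ S then a i ^ 2 / N else 0 := by
        intro i
        by_cases h : i ∈ S
        · simp [h, div_pow, Real.sq_sqrt hNpos.le]
        · simp [h]
      simp only [this]
      rw [Finset.sum_ite_mem, Finset.univ_inter, ← Finset.sum_div]
      field_simp
      exact hN.symm
    · have hfilter : (Finset.univ.filter fun i =>
          (if i ∈ S then a i / Real.sqrt N else 0) ≠ 0) = S := by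
        ext i
        simp only [Finset.mem_filter, Finset.mem_univ, true_and]
        by_cases h : i ∈ S
        · have hai : a i ≠ 0 := by
            have : γ < a i ^ 2 := by simpa [hS] using h
            have : 0 < a i ^ 2 := lt_of_le_of_lt hγ this
            exact pow_ne_zero_iff (n := 2) (by norm_num) |>.mp (ne_of_gt this)
          simp [h, div_ne_zero hai (ne_of_gt hsqrt)]
        · simp [h]
      have hsum : (∑ i, a i * (if i ∈ S then a i / Real.sqrt N else 0))
          = Real.sqrt N := by
        have : ∀ i : Fin p, a i * (if i ∈ S then a i / Real.sqrt N else 0)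
            = if i ∈ S then a i ^ 2 / Real.sqrt N else 0 := by
          intro i; by_cases h : i ∈ S <;> simp [h] <;> ring
        simp only [this]
        rw [Finset.sum_ite_mem, Finset.univ_inter, ← Finset.sum_div, ← hN,
          Real.div_sqrt]
      rw [hfilter, hsum, Real.sq_sqrt hNpos.le, hmaxsum, Finset.sum_sub_distrib,
        Finset.sum_const, nsmul_eq_mul, ← hN, mul_comm]
  · rintro v ⟨z, hz, rfl⟩
    set T : Finset (Fin p) := Finset.univ.filter (fun i => z i ≠ 0) with hT
    have haz : (∑ i, a i * z i) = ∑ i ∈ T, a i * z i := by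
      rw [hT, Finset.sum_filter_of_ne]
      intro i _ h hzi
      exact h (by rw [hzi, mul_zero])
    have hz2 : (∑ i ∈ T, z i ^ 2) = 1 := by
      rw [← hz, hT, Finset.sum_filter_of_ne]
      intro i _ h hzi
      exact h (by rw [hzi]; ring)
    have hCS : (∑ i ∈ T, a i * z i) ^ 2 ≤ ∑ i ∈ T, a i ^ 2 := by
      calc (∑ i ∈ T, a i * z i) ^ 2
          ≤ (∑ i ∈ T, a i ^ 2) * ∑ i ∈ T, z i ^ 2 :=
            Finset.sum_mul_sq_le_sq_mul_sq T a z
        _ = ∑ i ∈ T, a i ^ 2 := by rw [hz2, mul_one]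
    calc (∑ i, a i * z i) ^ 2 - γ * (T.card : ℝ)
        ≤ (∑ i ∈ T, a i ^ 2) - γ * (T.card : ℝ) := by
          rw [haz]; linarith
      _ = ∑ i ∈ T, (a i ^ 2 - γ) := by
          rw [Finset.sum_sub_distrib, Finset.sum_const, nsmul_eq_mul, mul_comm]
      _ ≤ ∑ i ∈ T, max (a i ^ 2 - γ) 0 :=
          Finset.sum_le_sum fun i _ => le_max_left _ _
      _ ≤ ∑ i, max (a i ^ 2 - γ) 0 :=
          Finset.sum_le_sum_of_subset_of_nonneg (Finset.subset_univ T)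
            (fun i _ _ => le_max_right _ _)
end

section
/- With a ∈ ℝ^p, γ ≥ 0, max_i a_i² > γ, the maximizer z* of (aᵀz)² − γ‖z‖₀ over the unit sphere (up to global sign) has coordinates z*_i = 1{a_i² > γ}·a_i / sqrt(∑_k 1{a_k² > γ} a_k²), and z*_i = 0 if and only if a_i² ≤ γ. -/
/-- The (up to sign) maximizer of `z ↦ (aᵀz)² − γ‖z‖₀` over the unit sphere has
coordinates `z*_i = 1{a_i² > γ}·a_i / sqrt(∑ₖ 1{a_k² > γ} a_k²)`, and
`z*_i = 0 ↔ a_i² ≤ γ`. -/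
theorem stmt5 (p : ℕ) (a : Fin p → ℝ) (γ : ℝ) (hγ : 0 ≤ γ)
    (hex : ∃ i, γ < a i ^ 2)
    (zstar : Fin p → ℝ)
    (hzstar : ∀ i, zstar i =
      (if γ < a i ^ 2 then a i else 0) /
        Real.sqrt (∑ k, if γ < a k ^ 2 then a k ^ 2 else 0)) :
    (∑ i, zstar i ^ 2) = 1 ∧
    (∀ z : Fin p → ℝ, (∑ i, z i ^ 2) = 1 →
      (∑ i, a i * z i) ^ 2 -
          γ * ((Finset.univ.filter fun i => z i ≠ 0).card : ℝ) ≤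
      (∑ i, a i * zstar i) ^ 2 -
          γ * ((Finset.univ.filter fun i => zstar i ≠ 0).card : ℝ)) ∧
    (∀ i, zstar i = 0 ↔ a i ^ 2 ≤ γ) := by
  classical
  set s : ℝ := ∑ k, if γ < a k ^ 2 then a k ^ 2 else 0 with hs_def
  obtain ⟨i0, hi0⟩ := hex
  have hs_pos : 0 < s := by
    apply Finset.sum_pos' (fun k _ => by positivity)
    refine ⟨i0, Finset.mem_univ _, ?_⟩
    rw [if_pos hi0]; linarith
  have hsqrt_pos : 0 < Real.sqrt s := Real.sqrt_pos.mpr hs_pos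
  have hsq : Real.sqrt s ^ 2 = s := Real.sq_sqrt hs_pos.le
  -- third claim
  have h3 : ∀ i, zstar i = 0 ↔ a i ^ 2 ≤ γ := by
    intro i
    rw [hzstar i, div_eq_zero_iff]
    constructor
    · rintro (h | h)
      · by_contra hc
        push_neg at hc
        rw [if_pos hc] at h
        nlinarith
      · exact absurd h hsqrt_pos.ne'
    · intro h; left; rw [if_neg (not_lt.mpr h)]
  -- norm
  have hnorm : (∑ i, zstar i ^ 2) = 1 := by
    have h1 : ∀ i, zstar i ^ 2 = (if γ < a i ^ 2 then a i ^ 2 else 0) / s := by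
      intro i
      rw [hzstar i, div_pow, hsq]
      congr 1
      split <;> simp
    rw [Finset.sum_congr rfl fun i _ => h1 i, ← Finset.sum_div, ← hs_def,
      div_self hs_pos.ne']
  refine ⟨hnorm, ?_, h3⟩
  set M : ℝ := ∑ i, if γ < a i ^ 2 then a i ^ 2 - γ else 0 with hM_def
  -- objective at zstar equals M
  have hsum_zstar : (∑ i, a i * zstar i) = Real.sqrt s := by
    have h1 : ∀ i, a i * zstar i = (if γ < a i ^ 2 then a i ^ 2 else 0) / Real.sqrt s := by
      intro i
      rw [hzstar i]
      split
      · rw [← mul_div_assoc]; ring_nf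
      · simp
    rw [Finset.sum_congr rfl fun i _ => h1 i, ← Finset.sum_div, ← hs_def, Real.div_sqrt]
  have hcard_zstar : (Finset.univ.filter fun i => zstar i ≠ 0) =
      (Finset.univ.filter fun i => γ < a i ^ 2) := by
    apply Finset.filter_congr
    intro i _
    simp [h3 i, not_le]
  have hM_eq : (∑ i, a i * zstar i) ^ 2 -
      γ * ((Finset.univ.filter fun i => zstar i ≠ 0).card : ℝ) = M := by
    rw [hsum_zstar, hsq, hcard_zstar, hM_def]
    have h2 : ∀ i : Fin p, (if γ < a i ^ 2 then a i ^ 2 - γ else 0) =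
        (if γ < a i ^ 2 then a i ^ 2 else 0) - (if γ < a i ^ 2 then γ else 0) := by
      intro i; split <;> simp
    rw [Finset.sum_congr rfl fun i _ => h2 i, Finset.sum_sub_distrib, ← hs_def]
    have h4 : (∑ i : Fin p, if γ < a i ^ 2 then γ else 0) =
        γ * ((Finset.univ.filter fun i => γ < a i ^ 2).card : ℝ) := by
      rw [← Finset.sum_filter, Finset.sum_const, nsmul_eq_mul, mul_comm]
    rw [h4]
  rw [hM_eq]
  intro z hz
  set T := Finset.univ.filter fun i => z i ≠ 0 with hT_def
  have hsum_eq : (∑ i, a i * z i) = ∑ i ∈ T, a i * z i := by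
    rw [hT_def]
    exact (Finset.sum_filter_of_ne (fun i _ h => by
      intro hzi; exact h (by rw [hzi, mul_zero]))).symm
  have hTz : (∑ i ∈ T, z i ^ 2) ≤ 1 := by
    rw [← hz]
    exact Finset.sum_le_sum_of_subset_of_nonneg (Finset.filter_subset _ _)
      (fun i _ _ => by positivity)
  have hcs : (∑ i, a i * z i) ^ 2 ≤ ∑ i ∈ T, a i ^ 2 := by
    rw [hsum_eq]
    calc (∑ i ∈ T, a i * z i) ^ 2 ≤ (∑ i ∈ T, a i ^ 2) * (∑ i ∈ T, z i ^ 2) :=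
          Finset.sum_mul_sq_le_sq_mul_sq T a z
      _ ≤ (∑ i ∈ T, a i ^ 2) * 1 := by
          apply mul_le_mul_of_nonneg_left hTz
          exact Finset.sum_nonneg fun i _ => by positivity
      _ = ∑ i ∈ T, a i ^ 2 := mul_one _
  have hstep : (∑ i, a i * z i) ^ 2 - γ * (T.card : ℝ) ≤ ∑ i ∈ T, (a i ^ 2 - γ) := by
    rw [Finset.sum_sub_distrib, Finset.sum_const, nsmul_eq_mul, mul_comm (T.card : ℝ) γ]
    linarith
  have hstep2 : (∑ i ∈ T, (a i ^ 2 - γ)) ≤ M := by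
    calc (∑ i ∈ T, (a i ^ 2 - γ))
        ≤ ∑ i ∈ T, (if γ < a i ^ 2 then a i ^ 2 - γ else 0) := by
          apply Finset.sum_le_sum
          intro i _
          split
          · exact le_refl _
          · next h => push_neg at h; linarith
      _ ≤ M := by
          rw [hM_def]
          exact Finset.sum_le_sum_of_subset_of_nonneg (Finset.subset_univ _)
            (fun i _ _ => by split <;> [linarith [le_of_lt (by assumption : γ < a i ^ 2)]; exact le_refl 0])
  linarith
end

section
/- Let C ∈ ℝ^{p₁×p₂} with rows c₁,…,c_{p₁} ∈ ℝ^{p₂}, γ₂ ≥ 0, μ > 0. Then max over unit vectors z₁ ∈ ℝ^{p₁} and z₂ ∈ ℝ^{p₂} of ( μ z₁ᵀ C z₂ − γ₂‖z₂‖₁ ) equals max over unit z₁ of sqrt( ∑_{i=1}^{p₂} [ μ |c̃ᵢᵀ z₁| − γ₂ ]₊² ), where c̃ᵢ are the columns of C, provided the inner quantity is positive for some z₁. -/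
open Finset Real

private lemma swap_sum {p₁ p₂ : ℕ} (C : Matrix (Fin p₁) (Fin p₂) ℝ)
    (z₁ : Fin p₁ → ℝ) (z₂ : Fin p₂ → ℝ) :
    (∑ k, ∑ i, z₁ k * C k i * z₂ i) = ∑ i, (∑ k, C k i * z₁ k) * z₂ i := by
  rw [Finset.sum_comm]
  refine Finset.sum_congr rfl fun i _ => ?_
  rw [Finset.sum_mul]
  exact Finset.sum_congr rfl fun k _ => by ring

/-- Upper bound: for unit `z₂`, the penalized bilinear value is at most
`sqrt(∑ bᵢ²)`. -/
private lemma auxA {p₁ p₂ : ℕ} {C : Matrix (Fin p₁) (Fin p₂) ℝ} {γ₂ μ : ℝ}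
    (hμ : 0 < μ) (z₁ : Fin p₁ → ℝ) (z₂ : Fin p₂ → ℝ)
    (h2 : (∑ i, z₂ i ^ 2) = 1) :
    μ * (∑ k, ∑ i, z₁ k * C k i * z₂ i) - γ₂ * ∑ i, |z₂ i| ≤
      Real.sqrt (∑ i, max (μ * |∑ k, C k i * z₁ k| - γ₂) 0 ^ 2) := by
  set b : Fin p₂ → ℝ := fun i => max (μ * |∑ k, C k i * z₁ k| - γ₂) 0 with hb
  have step1 : μ * (∑ k, ∑ i, z₁ k * C k i * z₂ i) - γ₂ * ∑ i, |z₂ i|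
      ≤ ∑ i, b i * |z₂ i| := by
    rw [swap_sum, Finset.mul_sum, Finset.mul_sum, ← Finset.sum_sub_distrib]
    refine Finset.sum_le_sum fun i _ => ?_
    have h1 : μ * ((∑ k, C k i * z₁ k) * z₂ i) ≤ μ * |∑ k, C k i * z₁ k| * |z₂ i| := by
      calc μ * ((∑ k, C k i * z₁ k) * z₂ i)
          ≤ |μ * ((∑ k, C k i * z₁ k) * z₂ i)| := le_abs_self _
        _ = μ * |∑ k, C k i * z₁ k| * |z₂ i| := by
            rw [abs_mul, abs_mul, abs_of_pos hμ]; ring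
    calc μ * ((∑ k, C k i * z₁ k) * z₂ i) - γ₂ * |z₂ i|
        ≤ μ * |∑ k, C k i * z₁ k| * |z₂ i| - γ₂ * |z₂ i| := by linarith
      _ = (μ * |∑ k, C k i * z₁ k| - γ₂) * |z₂ i| := by ring
      _ ≤ b i * |z₂ i| := mul_le_mul_of_nonneg_right (le_max_left _ _) (abs_nonneg _)
  refine step1.trans ?_
  have hnn : 0 ≤ ∑ i, b i * |z₂ i| :=
    Finset.sum_nonneg fun i _ => mul_nonneg (le_max_right _ _) (abs_nonneg _)
  have habs : (∑ i, |z₂ i| ^ 2) = 1 := by simpa [sq_abs] using h2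
  calc (∑ i, b i * |z₂ i|) = Real.sqrt ((∑ i, b i * |z₂ i|) ^ 2) :=
        (Real.sqrt_sq hnn).symm
    _ ≤ Real.sqrt ((∑ i, b i ^ 2) * ∑ i, |z₂ i| ^ 2) :=
        Real.sqrt_le_sqrt (Finset.sum_mul_sq_le_sq_mul_sq _ _ _)
    _ = Real.sqrt (∑ i, b i ^ 2) := by rw [habs, mul_one]

/-- Achievability: when `∑ bᵢ² > 0` there is a unit `z₂` attaining `sqrt(∑ bᵢ²)`. -/
private lemma auxB {p₁ p₂ : ℕ} {C : Matrix (Fin p₁) (Fin p₂) ℝ} {γ₂ μ : ℝ}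
    (z₁ : Fin p₁ → ℝ)
    (hpos : 0 < ∑ i, max (μ * |∑ k, C k i * z₁ k| - γ₂) 0 ^ 2) :
    ∃ z₂ : Fin p₂ → ℝ, (∑ i, z₂ i ^ 2) = 1 ∧
      μ * (∑ k, ∑ i, z₁ k * C k i * z₂ i) - γ₂ * ∑ i, |z₂ i| =
        Real.sqrt (∑ i, max (μ * |∑ k, C k i * z₁ k| - γ₂) 0 ^ 2) := by
  set t : Fin p₂ → ℝ := fun i => ∑ k, C k i * z₁ k with ht
  set b : Fin p₂ → ℝ := fun i => max (μ * |t i| - γ₂) 0 with hb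
  set s : ℝ := Real.sqrt (∑ i, b i ^ 2) with hs
  have hs0 : 0 < s := Real.sqrt_pos.mpr hpos
  have hss : s ^ 2 = ∑ i, b i ^ 2 := Real.sq_sqrt hpos.le
  set sg : Fin p₂ → ℝ := fun i => if t i < 0 then -1 else 1 with hsg
  have hsg2 : ∀ i, sg i ^ 2 = 1 := by
    intro i; by_cases h : t i < 0 <;> simp [hsg, h]
  have hsgabs : ∀ i, |sg i| = 1 := by
    intro i; by_cases h : t i < 0 <;> simp [hsg, h]
  have hsgt : ∀ i, sg i * t i = |t i| := by
    intro i
    by_cases h : t i < 0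
    · simp [hsg, h, abs_of_neg h]
    · simp [hsg, h, abs_of_nonneg (not_lt.mp h)]
  refine ⟨fun i => sg i * b i / s, ?_, ?_⟩
  · have : ∀ i, (sg i * b i / s) ^ 2 = b i ^ 2 / s ^ 2 := by
      intro i; rw [div_pow, mul_pow, hsg2 i, one_mul]
    rw [Finset.sum_congr rfl fun i _ => this i, ← Finset.sum_div, ← hss]
    exact div_self (by positivity)
  · have hbnn : ∀ i, 0 ≤ b i := fun i => le_max_right _ _
    have habs : ∀ i, |sg i * b i / s| = b i / s := by
      intro i
      rw [abs_div, abs_mul, hsgabs i, one_mul, abs_of_nonneg (hbnn i),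
        abs_of_pos hs0]
    have hswap : (∑ k, ∑ i, z₁ k * C k i * (sg i * b i / s))
        = ∑ i, t i * (sg i * b i / s) := swap_sum C z₁ _
    rw [hswap, Finset.sum_congr rfl fun i _ => habs i]
    have key : ∀ i, μ * (t i * (sg i * b i / s)) - γ₂ * (b i / s)
        = b i ^ 2 / s := by
      intro i
      have h1 : t i * (sg i * b i / s) = |t i| * b i / s := by
        rw [← hsgt i]; ring
      rw [h1]
      rcases le_or_gt (μ * |t i| - γ₂) 0 with h | h
      · have : b i = 0 := max_eq_right h
        simp [this]
      · have hbi : b i = μ * |t i| - γ₂ := max_eq_left h.le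
        field_simp
        nlinarith [hbi]
    calc μ * (∑ i, t i * (sg i * b i / s)) - γ₂ * ∑ i, b i / s
        = ∑ i, (μ * (t i * (sg i * b i / s)) - γ₂ * (b i / s)) := by
          rw [Finset.mul_sum, Finset.mul_sum, ← Finset.sum_sub_distrib]
      _ = ∑ i, b i ^ 2 / s := Finset.sum_congr rfl fun i _ => key i
      _ = (∑ i, b i ^ 2) / s := by rw [← Finset.sum_div]
      _ = s := by rw [← hss]; field_simp [pow_two]

/-- Uniform bound over unit `z₁`. -/
private lemma auxM {p₁ p₂ : ℕ} {C : Matrix (Fin p₁) (Fin p₂) ℝ} {γ₂ μ : ℝ}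
    (hγ : 0 ≤ γ₂) (hμ : 0 < μ) (z₁ : Fin p₁ → ℝ)
    (h1 : (∑ k, z₁ k ^ 2) = 1) :
    Real.sqrt (∑ i, max (μ * |∑ k, C k i * z₁ k| - γ₂) 0 ^ 2) ≤
      Real.sqrt (∑ i, (μ * ∑ k, |C k i|) ^ 2) := by
  apply Real.sqrt_le_sqrt
  refine Finset.sum_le_sum fun i _ => ?_
  have hz : ∀ k, |z₁ k| ≤ 1 := by
    intro k
    have : z₁ k ^ 2 ≤ 1 := by
      rw [← h1]
      exact Finset.single_le_sum (fun j _ => sq_nonneg (z₁ j)) (Finset.mem_univ k)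
    nlinarith [abs_nonneg (z₁ k), sq_abs (z₁ k)]
  have ht : |∑ k, C k i * z₁ k| ≤ ∑ k, |C k i| := by
    calc |∑ k, C k i * z₁ k| ≤ ∑ k, |C k i * z₁ k| := Finset.abs_sum_le_sum_abs _ _
      _ ≤ ∑ k, |C k i| := by
          refine Finset.sum_le_sum fun k _ => ?_
          rw [abs_mul]
          calc |C k i| * |z₁ k| ≤ |C k i| * 1 :=
                mul_le_mul_of_nonneg_left (hz k) (abs_nonneg _)
            _ = |C k i| := mul_one _
  have hnn : 0 ≤ μ * ∑ k, |C k i| :=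
    mul_nonneg hμ.le (Finset.sum_nonneg fun k _ => abs_nonneg _)
  have hle : max (μ * |∑ k, C k i * z₁ k| - γ₂) 0 ≤ μ * ∑ k, |C k i| := by
    apply max_le _ hnn
    have : μ * |∑ k, C k i * z₁ k| ≤ μ * ∑ k, |C k i| :=
      mul_le_mul_of_nonneg_left ht hμ.le
    linarith
  exact pow_le_pow_left₀ (le_max_right _ _) hle 2

/-- Joint maximization of the L1-penalized bilinear objective over both unit
vectors reduces, after eliminating `z₂`, to maximizing
`sqrt(∑ᵢ [μ|c̃ᵢᵀz₁| − γ₂]₊²)` over unit `z₁`. -/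
theorem stmt8 (p₁ p₂ : ℕ) (C : Matrix (Fin p₁) (Fin p₂) ℝ) (γ₂ μ : ℝ)
    (hγ : 0 ≤ γ₂) (hμ : 0 < μ)
    (hpos : ∃ z₁ : Fin p₁ → ℝ, (∑ k, z₁ k ^ 2) = 1 ∧
      0 < ∑ i, max (μ * |∑ k, C k i * z₁ k| - γ₂) 0 ^ 2) :
    sSup {v : ℝ | ∃ (z₁ : Fin p₁ → ℝ) (z₂ : Fin p₂ → ℝ),
        (∑ k, z₁ k ^ 2) = 1 ∧ (∑ i, z₂ i ^ 2) = 1 ∧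
        v = μ * (∑ k, ∑ i, z₁ k * C k i * z₂ i) - γ₂ * ∑ i, |z₂ i|} =
    sSup {v : ℝ | ∃ z₁ : Fin p₁ → ℝ, (∑ k, z₁ k ^ 2) = 1 ∧
        v = Real.sqrt (∑ i, max (μ * |∑ k, C k i * z₁ k| - γ₂) 0 ^ 2)} := by
  set A : Set ℝ := {v : ℝ | ∃ (z₁ : Fin p₁ → ℝ) (z₂ : Fin p₂ → ℝ),
      (∑ k, z₁ k ^ 2) = 1 ∧ (∑ i, z₂ i ^ 2) = 1 ∧
      v = μ * (∑ k, ∑ i, z₁ k * C k i * z₂ i) - γ₂ * ∑ i, |z₂ i|} with hA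
  set B : Set ℝ := {v : ℝ | ∃ z₁ : Fin p₁ → ℝ, (∑ k, z₁ k ^ 2) = 1 ∧
      v = Real.sqrt (∑ i, max (μ * |∑ k, C k i * z₁ k| - γ₂) 0 ^ 2)} with hB
  obtain ⟨z₁₀, hz10, hpos0⟩ := hpos
  obtain ⟨z₂₀, hz20, hval0⟩ := auxB (C := C) (γ₂ := γ₂) (μ := μ) z₁₀ hpos0
  set s₀ : ℝ := Real.sqrt (∑ i, max (μ * |∑ k, C k i * z₁₀ k| - γ₂) 0 ^ 2) with hs₀
  have hs00 : 0 < s₀ := Real.sqrt_pos.mpr hpos0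
  have hAne : A.Nonempty := ⟨s₀, z₁₀, z₂₀, hz10, hz20, hval0.symm⟩
  have hBne : B.Nonempty := ⟨s₀, z₁₀, hz10, rfl⟩
  set M : ℝ := Real.sqrt (∑ i, (μ * ∑ k, |C k i|) ^ 2) with hM
  have hBub : ∀ v ∈ B, v ≤ M := by
    rintro v ⟨z₁, h1, rfl⟩
    exact auxM hγ hμ z₁ h1
  have hAub : ∀ v ∈ A, v ≤ M := by
    rintro v ⟨z₁, z₂, h1, h2, rfl⟩
    exact (auxA hμ z₁ z₂ h2).trans (auxM hγ hμ z₁ h1)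
  have hAbdd : BddAbove A := ⟨M, hAub⟩
  have hBbdd : BddAbove B := ⟨M, hBub⟩
  apply le_antisymm
  · refine csSup_le hAne ?_
    rintro v ⟨z₁, z₂, h1, h2, rfl⟩
    refine le_trans (auxA hμ z₁ z₂ h2) (le_csSup hBbdd ⟨z₁, h1, rfl⟩)
  · refine csSup_le hBne ?_
    rintro v ⟨z₁, h1, rfl⟩
    rcases lt_or_ge 0 (∑ i, max (μ * |∑ k, C k i * z₁ k| - γ₂) 0 ^ 2) with h | h
    · obtain ⟨z₂, h2, hval⟩ := auxB (C := C) (γ₂ := γ₂) (μ := μ) z₁ h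
      rw [← hval]
      exact le_csSup hAbdd ⟨z₁, z₂, h1, h2, rfl⟩
    · have hz : (∑ i, max (μ * |∑ k, C k i * z₁ k| - γ₂) 0 ^ 2) = 0 :=
        le_antisymm h (Finset.sum_nonneg fun i _ => sq_nonneg _)
      rw [hz, Real.sqrt_zero]
      exact le_trans hs00.le (le_csSup hAbdd ⟨z₁₀, z₂₀, hz10, hz20, hval0.symm⟩)
end

section
/- Let a ∈ ℝ^p, b ∈ ℝ^p, ε ≥ 0, γ ≥ 0, and suppose max_i |a_i + ε b_i| > γ. Then the maximum over unit vectors z of ∑ᵢ zᵢ(aᵢ + ε bᵢ) − γ‖z‖₁ is attained at z*_i = sgn(a_i + ε b_i)[|a_i + ε b_i| − γ]₊ / sqrt(∑_k [|a_k + ε b_k| − γ]₊²), and z*_i = 0 iff |a_i + ε b_i| ≤ γ. -/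
/-- Directed sparse CCA solution: the maximizer of
`z ↦ ∑ᵢ zᵢ(aᵢ + ε bᵢ) − γ‖z‖₁` over the unit sphere is the normalized
soft-thresholding of `a + ε b`, and `z*_i = 0 ↔ |a_i + ε b_i| ≤ γ`. -/
theorem stmt13 (p : ℕ) (a b : Fin p → ℝ) (ε γ : ℝ)
    (hε : 0 ≤ ε) (hγ : 0 ≤ γ)
    (hex : ∃ i, γ < |a i + ε * b i|)
    (zstar : Fin p → ℝ)
    (hzstar : ∀ i, zstar i =
      Real.sign (a i + ε * b i) * max (|a i + ε * b i| - γ) 0 /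
        Real.sqrt (∑ k, max (|a k + ε * b k| - γ) 0 ^ 2)) :
    (∑ i, zstar i ^ 2) = 1 ∧
    (∀ z : Fin p → ℝ, (∑ i, z i ^ 2) = 1 →
      (∑ i, z i * (a i + ε * b i)) - γ * ∑ i, |z i| ≤
      (∑ i, zstar i * (a i + ε * b i)) - γ * ∑ i, |zstar i|) ∧
    (∀ i, zstar i = 0 ↔ |a i + ε * b i| ≤ γ) := by
  set c : Fin p → ℝ := fun i => a i + ε * b i with hc
  set m : Fin p → ℝ := fun i => max (|c i| - γ) 0 with hm
  have hm0 : ∀ i, 0 ≤ m i := fun i => le_max_right _ _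
  obtain ⟨i0, hi0⟩ := hex
  have hmi0 : 0 < m i0 := lt_max_of_lt_left (by linarith)
  have hQ : 0 < ∑ k, m k ^ 2 :=
    Finset.sum_pos' (fun i _ => sq_nonneg _) ⟨i0, Finset.mem_univ _, by positivity⟩
  set S : ℝ := Real.sqrt (∑ k, m k ^ 2) with hS
  have hSpos : 0 < S := Real.sqrt_pos.2 hQ
  have hSsq : S ^ 2 = ∑ k, m k ^ 2 := Real.sq_sqrt hQ.le
  -- squares of zstar
  have hsq : ∀ i, zstar i ^ 2 = m i ^ 2 / S ^ 2 := by
    intro i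
    rw [hzstar i]
    by_cases h : γ < |c i|
    · have hne : c i ≠ 0 := by
        intro h0; rw [h0] at h; simp at h; linarith
      have : Real.sign (c i) ^ 2 = 1 := by
        rcases Real.sign_apply_eq_of_ne_zero _ hne with h1 | h1 <;> rw [h1] <;> norm_num
      field_simp
      ring_nf
      rw [mul_comm]
      rw [this]; ring
    · have hmz : m i = 0 := max_eq_right (by have := not_lt.1 h; linarith)
      have hle : |a i + ε * b i| ≤ γ := not_lt.1 h
      simp [hmz, hle]
  have hsum1 : (∑ i, zstar i ^ 2) = 1 := by
    rw [Finset.sum_congr rfl fun i _ => hsq i, ← Finset.sum_div, ← hSsq, div_self (by positivity)]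
  -- |zstar i| = m i / S
  have habs : ∀ i, |zstar i| = m i / S := by
    intro i
    rw [hzstar i]
    by_cases h : γ < |c i|
    · have hne : c i ≠ 0 := by
        intro h0; rw [h0] at h; simp at h; linarith
      have h1 : |Real.sign (c i)| = 1 := by
        rcases Real.sign_apply_eq_of_ne_zero _ hne with h1 | h1 <;> rw [h1] <;> norm_num
      rw [abs_div, abs_mul, h1, one_mul, abs_of_nonneg (hm0 i), abs_of_pos hSpos]
    · have hmz : m i = 0 := max_eq_right (by have := not_lt.1 h; linarith)
      have hle : |a i + ε * b i| ≤ γ := not_lt.1 h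
      simp [hmz, hle]
  -- zstar i * c i = |c i| * m i / S
  have hmul : ∀ i, zstar i * c i = |c i| * m i / S := by
    intro i
    rw [hzstar i]
    by_cases h : γ < |c i|
    · have hsc : Real.sign (c i) * c i = |c i| := by
        rcases lt_trichotomy (c i) 0 with hlt | heq | hgt
        · rw [Real.sign_of_neg hlt, abs_of_neg hlt]; ring
        · rw [heq]; simp
        · rw [Real.sign_of_pos hgt, abs_of_pos hgt]; ring
      field_simp
      rw [mul_comm (Real.sign (c i)) (m i), mul_assoc, hsc]; ring
    · have hmz : m i = 0 := max_eq_right (by have := not_lt.1 h; linarith)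
      have hle : |a i + ε * b i| ≤ γ := not_lt.1 h
      simp [hmz, hle]
  -- per-term: (|c i| - γ) * m i = m i ^ 2
  have hkey : ∀ i, (|c i| - γ) * m i = m i ^ 2 := by
    intro i
    by_cases h : γ < |c i|
    · have : m i = |c i| - γ := max_eq_left (by linarith)
      rw [this]; ring
    · have hmz : m i = 0 := max_eq_right (by have := not_lt.1 h; linarith)
      have hle : |a i + ε * b i| ≤ γ := not_lt.1 h
      simp [hmz, hle]
  -- value at zstar is S
  have hval : (∑ i, zstar i * c i) - γ * ∑ i, |zstar i| = S := by
    rw [Finset.sum_congr rfl fun i _ => hmul i, Finset.sum_congr rfl fun i _ => habs i,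
      ← Finset.sum_div, ← Finset.sum_div]
    have hnum : (∑ i, |c i| * m i) - γ * ∑ i, m i = ∑ i, m i ^ 2 := by
      rw [Finset.mul_sum, ← Finset.sum_sub_distrib]
      exact Finset.sum_congr rfl fun i _ => by nlinarith [hkey i]
    field_simp
    nlinarith [hSsq, hnum]
  refine ⟨hsum1, ?_, ?_⟩
  · intro z hz
    rw [hval]
    have step1 : (∑ i, z i * c i) - γ * ∑ i, |z i| ≤ ∑ i, |z i| * m i := by
      rw [Finset.mul_sum, ← Finset.sum_sub_distrib]
      apply Finset.sum_le_sum
      intro i _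
      have h1 : z i * c i ≤ |z i| * |c i| := by
        calc z i * c i ≤ |z i * c i| := le_abs_self _
        _ = |z i| * |c i| := abs_mul _ _
      have h2 : |z i| * (|c i| - γ) ≤ |z i| * m i :=
        mul_le_mul_of_nonneg_left (le_max_left _ _) (abs_nonneg _)
      nlinarith
    have step2 : ∑ i, |z i| * m i ≤ S := by
      calc ∑ i, |z i| * m i
          ≤ Real.sqrt (∑ i, |z i| ^ 2) * Real.sqrt (∑ i, m i ^ 2) :=
            Real.sum_mul_le_sqrt_mul_sqrt _ _ _
        _ = S := by
            simp only [sq_abs]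
            rw [hz, Real.sqrt_one, one_mul]
    linarith
  · intro i
    constructor
    · intro h0
      by_contra h
      push_neg at h
      have hne : a i + ε * b i ≠ 0 := by
        intro hx; rw [hx] at h; simp at h; linarith
      have hmi : (0:ℝ) < max (|a i + ε * b i| - γ) 0 :=
        lt_max_of_lt_left (by linarith)
      have hz := hzstar i
      rw [h0] at hz
      have hsne : Real.sign (a i + ε * b i) ≠ 0 := by
        rcases Real.sign_apply_eq_of_ne_zero _ hne with h1 | h1 <;> rw [h1] <;> norm_num
      have : Real.sign (a i + ε * b i) * max (|a i + ε * b i| - γ) 0 / S ≠ 0 :=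
        div_ne_zero (mul_ne_zero hsne (ne_of_gt hmi)) (ne_of_gt hSpos)
      exact this hz.symm
    · intro h
      have hmz : max (|a i + ε * b i| - γ) 0 = 0 := max_eq_right (by linarith)
      rw [hzstar i, hmz]; simp
end

section
/- For a ∈ ℝ^p and γ ≥ 0 with max_i|a_i| > γ, the maximum value of aᵀz − γ‖z‖₁ over the unit ball {‖z‖₂ ≤ 1} equals its maximum over the unit sphere, namely sqrt(∑ᵢ[|a_i| − γ]₊²); if instead |a_i| ≤ γ for all i, the maximum over the unit ball is 0, attained at z = 0. -/
lemma stmt18_ub (p : ℕ) (a : Fin p → ℝ) (γ : ℝ) (z : Fin p → ℝ)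
    (hz : (∑ i, z i ^ 2) ≤ 1) :
    (∑ i, a i * z i) - γ * ∑ i, |z i| ≤
      Real.sqrt (∑ i, max (|a i| - γ) 0 ^ 2) := by
  set b : Fin p → ℝ := fun i => max (|a i| - γ) 0 with hb
  have h1 : (∑ i, a i * z i) - γ * ∑ i, |z i| ≤ ∑ i, b i * |z i| := by
    rw [Finset.mul_sum, ← Finset.sum_sub_distrib]
    apply Finset.sum_le_sum
    intro i _
    have h2 : a i * z i ≤ |a i| * |z i| := by
      calc a i * z i ≤ |a i * z i| := le_abs_self _
        _ = |a i| * |z i| := abs_mul _ _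
    have h3 : (|a i| - γ) ≤ b i := le_max_left _ _
    nlinarith [abs_nonneg (z i)]
  have hbz : 0 ≤ ∑ i, b i * |z i| :=
    Finset.sum_nonneg fun i _ => mul_nonneg (le_max_right _ _) (abs_nonneg _)
  have hcs : (∑ i, b i * |z i|) ^ 2 ≤ (∑ i, b i ^ 2) * ∑ i, |z i| ^ 2 :=
    Finset.sum_mul_sq_le_sq_mul_sq Finset.univ b (fun i => |z i|)
  have hz2 : (∑ i, |z i| ^ 2) = ∑ i, z i ^ 2 := by
    apply Finset.sum_congr rfl; intro i _; exact sq_abs _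
  have hB : 0 ≤ ∑ i, b i ^ 2 := Finset.sum_nonneg fun i _ => sq_nonneg _
  have h4 : (∑ i, b i * |z i|) ^ 2 ≤ ∑ i, b i ^ 2 := by
    calc (∑ i, b i * |z i|) ^ 2 ≤ (∑ i, b i ^ 2) * ∑ i, |z i| ^ 2 := hcs
      _ ≤ (∑ i, b i ^ 2) * 1 := by
          apply mul_le_mul_of_nonneg_left _ hB
          rw [hz2]; exact hz
      _ = ∑ i, b i ^ 2 := mul_one _
  have h5 : ∑ i, b i * |z i| ≤ Real.sqrt (∑ i, b i ^ 2) := by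
    rw [Real.le_sqrt hbz]
    · exact h4
    · exact hB
  linarith

/-- Over the closed unit ball: if some `|a i| > γ` the maximum of
`aᵀz − γ‖z‖₁` equals `sqrt(∑ᵢ [|a_i| − γ]₊²)` (as over the sphere); if
`|a i| ≤ γ` for all `i`, the maximum is `0`, attained at `z = 0`. -/
theorem stmt18 (p : ℕ) (a : Fin p → ℝ) (γ : ℝ) (hγ : 0 ≤ γ) :
    ((∃ i, γ < |a i|) →
      IsGreatest
        {v : ℝ | ∃ z : Fin p → ℝ, (∑ i, z i ^ 2) ≤ 1 ∧
          v = (∑ i, a i * z i) - γ * ∑ i, |z i|}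
        (Real.sqrt (∑ i, max (|a i| - γ) 0 ^ 2))) ∧
    ((∀ i, |a i| ≤ γ) →
      IsGreatest
        {v : ℝ | ∃ z : Fin p → ℝ, (∑ i, z i ^ 2) ≤ 1 ∧
          v = (∑ i, a i * z i) - γ * ∑ i, |z i|}
        0) := by
  constructor
  · rintro ⟨i₀, hi₀⟩
    set b : Fin p → ℝ := fun i => max (|a i| - γ) 0 with hb
    set S : ℝ := ∑ i, b i ^ 2 with hS
    have hbnn : ∀ i, 0 ≤ b i := fun i => le_max_right _ _
    have hSpos : 0 < S := by
      apply Finset.sum_pos' (fun i _ => sq_nonneg _)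
      refine ⟨i₀, Finset.mem_univ _, ?_⟩
      have : 0 < b i₀ := lt_max_of_lt_left (by linarith)
      positivity
    constructor
    · -- membership: witness z
      refine ⟨fun i => Real.sign (a i) * b i / Real.sqrt S, ?_, ?_⟩
      · have hsq : ∀ i, (Real.sign (a i) * b i / Real.sqrt S) ^ 2 = b i ^ 2 / S := by
          intro i
          have hs2 : Real.sign (a i) ^ 2 * b i ^ 2 = b i ^ 2 := by
            rcases Real.sign_apply_eq (a i) with h | h | h
            · rw [h]; ring
            · have ha0 := Real.sign_eq_zero_iff.mp h
              have hbi : b i = 0 := by simp only [hb]; rw [ha0]; simp [hγ]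
              rw [h, hbi]; ring
            · rw [h]; ring
          rw [div_pow, Real.sq_sqrt hSpos.le, mul_pow, hs2]
        rw [Finset.sum_congr rfl (fun i _ => hsq i), ← Finset.sum_div]
        rw [div_self hSpos.ne']
      · have key : ∀ i, a i * (Real.sign (a i) * b i / Real.sqrt S) = |a i| * b i / Real.sqrt S := by
          intro i
          rcases lt_trichotomy (a i) 0 with h | h | h
          · rw [Real.sign_of_neg h, abs_of_neg h]; ring
          · rw [h]; simp
          · rw [Real.sign_of_pos h, abs_of_pos h]; ring
        have keyabs : ∀ i, |Real.sign (a i) * b i / Real.sqrt S| = b i / Real.sqrt S := by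
          intro i
          rw [abs_div, abs_mul, abs_of_nonneg (hbnn i),
            abs_of_nonneg (Real.sqrt_nonneg S)]
          rcases Real.sign_apply_eq (a i) with h | h | h <;> rw [h]
          · norm_num
          · have ha0 := Real.sign_eq_zero_iff.mp h
            have hbi : b i = 0 := by
              simp only [hb]; rw [ha0]; simp [hγ]
            rw [hbi]; simp
          · norm_num
        rw [Finset.sum_congr rfl (fun i _ => key i),
          Finset.sum_congr rfl (fun i _ => keyabs i)]
        have hterm : ∀ i, |a i| * b i / Real.sqrt S - γ * (b i / Real.sqrt S)
            = b i ^ 2 / Real.sqrt S := by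
          intro i
          have : (|a i| - γ) * b i = b i ^ 2 := by
            rcases le_or_gt (|a i| - γ) 0 with h | h
            · have hb0 : b i = 0 := max_eq_right h
              rw [hb0]; ring
            · have hb0 : b i = |a i| - γ := max_eq_left h.le
              rw [hb0]; ring
          field_simp
          nlinarith [this]
        rw [Finset.mul_sum, ← Finset.sum_sub_distrib,
          Finset.sum_congr rfl (fun i _ => hterm i), ← Finset.sum_div]
        exact Real.div_sqrt.symm
    · rintro v ⟨z, hz, rfl⟩
      exact stmt18_ub p a γ z hz
  · intro h
    constructor
    · exact ⟨fun _ => 0, by simp⟩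
    · rintro v ⟨z, hz, rfl⟩
      have : (∑ i, a i * z i) - γ * ∑ i, |z i| ≤ ∑ _i : Fin p, (0:ℝ) := by
        rw [Finset.mul_sum, ← Finset.sum_sub_distrib]
        apply Finset.sum_le_sum
        intro i _
        have h2 : a i * z i ≤ |a i| * |z i| := by
          calc a i * z i ≤ |a i * z i| := le_abs_self _
            _ = |a i| * |z i| := abs_mul _ _
        nlinarith [abs_nonneg (z i), h i]
      simpa using this
end
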